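/- Let w be any one of the four Chebyshev weights and 0<m<n integers. Then the polynomials q_{n,j}^m(w,·), j=0,…,n−1, are pairwise orthogonal with respect to w: ∫_{−1}^1 q_{n,j}^m(w,x)·q_{n,i}^m(w,x)·w(x) dx = 0 for all i≠j with 0≤i,j≤n−1. -/

import Mathlib

open Real Set Finset Polynomial

noncomputable section

/-- The four kinds of Chebyshev weights. -/
inductive ChebKind | one | two | three | four

/-- The Chebyshev weight function of each kind. -/
noncomputable def wFn : ChebKind → ℝ → ℝ
  | .one,   x => 1 / Real.sqrt (1 - x ^ 2)
  | .two,   x => Real.sqrt (1 - x ^ 2)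
  | .three, x => Real.sqrt ((1 + x) / (1 - x))
  | .four,  x => Real.sqrt ((1 - x) / (1 + x))

/-- The orthonormal polynomials associated with each Chebyshev weight
(`p_j(w,·)`), expressed via Mathlib's Chebyshev polynomials of the first and
second kind.  On `[-1,1]` these coincide with the usual trigonometric forms. -/
noncomputable def pPoly : ChebKind → ℕ → Polynomial ℝ
  | .one, 0       => Polynomial.C (1 / Real.sqrt π)
  | .one, (j + 1) => Polynomial.C (Real.sqrt (2 / π)) * Polynomial.Chebyshev.T ℝ ((j : ℤ) + 1)
  | .two, j       => Polynomial.C (Real.sqrt (2 / π)) * Polynomial.Chebyshev.U ℝ (j : ℤ)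
  | .three, j     => Polynomial.C (1 / Real.sqrt π) *
      (Polynomial.Chebyshev.U ℝ (j : ℤ) - Polynomial.Chebyshev.U ℝ ((j : ℤ) - 1))
  | .four, j      => Polynomial.C (1 / Real.sqrt π) *
      (Polynomial.Chebyshev.U ℝ (j : ℤ) + Polynomial.Chebyshev.U ℝ ((j : ℤ) - 1))

noncomputable def pEval (w : ChebKind) (j : ℕ) (x : ℝ) : ℝ := (pPoly w j).eval x

/-- Angular Chebyshev nodes `t_k^n`. -/
noncomputable def tNode : ChebKind → ℕ → ℕ → ℝ
  | .one,   n, k => (2 * (k : ℝ) - 1) * π / (2 * n)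
  | .two,   n, k => (k : ℝ) * π / (n + 1)
  | .three, n, k => (2 * (k : ℝ) - 1) * π / (2 * n + 1)
  | .four,  n, k => 2 * (k : ℝ) * π / (2 * n + 1)

/-- Chebyshev nodes `x_k^n = cos t_k^n`, zeros of `p_n(w,·)`. -/
noncomputable def xNode (w : ChebKind) (n k : ℕ) : ℝ := Real.cos (tNode w n k)

/-- Christoffel numbers `λ_k^n`. -/
noncomputable def lam : ChebKind → ℕ → ℕ → ℝ
  | .one,   n, _ => π / n
  | .two,   n, k => π / (n + 1) * Real.sin (tNode .two n k) ^ 2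
  | .three, n, k => 4 * π / (2 * n + 1) * Real.cos (tNode .three n k / 2) ^ 2
  | .four,  n, k => 4 * π / (2 * n + 1) * Real.sin (tNode .four n k / 2) ^ 2

/-- de la Vallée Poussin filter coefficients `μ_{n,j}^m`. -/
noncomputable def mufilt (n m j : ℕ) : ℝ :=
  if j ≤ n - m then 1 else ((n : ℝ) + m - j) / (2 * m)

/-- Fundamental VP polynomials `Φ_{n,k}^m(w;x)`. -/
noncomputable def Phi (w : ChebKind) (n m k : ℕ) (x : ℝ) : ℝ :=
  lam w n k * ∑ j ∈ Finset.range (n + m), mufilt n m j * pEval w j (xNode w n k) * pEval w j x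

/-- The VP interpolation polynomial `V_n^m f`. -/
noncomputable def VP (w : ChebKind) (n m : ℕ) (f : ℝ → ℝ) (x : ℝ) : ℝ :=
  ∑ k ∈ Finset.Icc 1 n, f (xNode w n k) * Phi w n m k x

/-- Jacobi weight `u(x) = (1-x)^γ (1+x)^δ`. -/
noncomputable def jac (γ δ : ℝ) (x : ℝ) : ℝ := (1 - x) ^ γ * (1 + x) ^ δ

/-- Weighted uniform norm `‖f·u‖ = max_{|x|≤1} |f(x) u(x)|`. -/
noncomputable def wnorm (γ δ : ℝ) (f : ℝ → ℝ) : ℝ :=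
  sSup ((fun x => |f x * jac γ δ x|) '' Set.Icc (-1 : ℝ) 1)

/-- Error of best weighted polynomial approximation `E_n(f)_u`. -/
noncomputable def bestE (γ δ : ℝ) (n : ℕ) (f : ℝ → ℝ) : ℝ :=
  sInf ((fun P : Polynomial ℝ => wnorm γ δ (fun x => f x - P.eval x)) ''
    {P : Polynomial ℝ | P.natDegree ≤ n})

/-- Membership in the space `C^0_u`: `f` is continuous on compact subsets of
`(-1,1)`, `f·u` extends continuously to `[-1,1]`, with value (= limit) `0` at
`±1` when the corresponding exponent is positive. -/
def MemC0 (γ δ : ℝ) (f : ℝ → ℝ) : Prop :=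
  ContinuousOn f (Set.Ioo (-1 : ℝ) 1) ∧
  ContinuousOn (fun x => f x * jac γ δ x) (Set.Icc (-1 : ℝ) 1) ∧
  (0 < γ → f 1 * jac γ δ 1 = 0) ∧ (0 < δ → f (-1) * jac γ δ (-1) = 0)

/-- Conditions (hp-u) on the exponents of `u=(1-x)^γ(1+x)^δ` relative to `w`. -/
def hpu : ChebKind → ℝ → ℝ → Prop
  | .one,   γ, δ => 0 ≤ γ ∧ γ ≤ 1 ∧ 0 ≤ δ ∧ δ ≤ 1
  | .two,   γ, δ => 0 < γ ∧ γ ≤ 3 / 2 ∧ 0 < δ ∧ δ ≤ 3 / 2 ∧ -1 ≤ γ - δ ∧ γ - δ ≤ 1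
  | .three, γ, δ => 0 ≤ γ ∧ γ ≤ 1 ∧ 0 < δ ∧ δ ≤ 3 / 2 ∧ γ - δ ≤ 1 / 2
  | .four,  γ, δ => 0 < γ ∧ γ ≤ 3 / 2 ∧ 0 ≤ δ ∧ δ ≤ 1 ∧ -(1 / 2) ≤ γ - δ

/-- `φ(x) = sqrt(1-x²)`. -/
noncomputable def phi (x : ℝ) : ℝ := Real.sqrt (1 - x ^ 2)

/-- The set of values `|f^{(r)}(x)| φ(x)^r u(x)`, `x ∈ (-1,1)`. -/
noncomputable def derSet (γ δ : ℝ) (r : ℕ) (f : ℝ → ℝ) : Set ℝ :=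
  (fun x : ℝ => |iteratedDerivWithin r f (Set.Ioo (-1 : ℝ) 1) x| * phi x ^ r * jac γ δ x) ''
    Set.Ioo (-1 : ℝ) 1

/-- Membership in the Sobolev-type space `W_r(u)`. -/
def MemW (γ δ : ℝ) (r : ℕ) (f : ℝ → ℝ) : Prop :=
  MemC0 γ δ f ∧ ContDiffOn ℝ r f (Set.Ioo (-1 : ℝ) 1) ∧ BddAbove (derSet γ δ r f)

/-- The norm of `W_r(u)`: `‖fu‖ + ‖f^{(r)} φ^r u‖`. -/
noncomputable def Wnorm (γ δ : ℝ) (r : ℕ) (f : ℝ → ℝ) : ℝ :=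
  wnorm γ δ f + sSup (derSet γ δ r f)

/-- The set of values `(n+1)^r E_n(f)_u`, `n ≥ 1`. -/
noncomputable def zSet (γ δ r : ℝ) (f : ℝ → ℝ) : Set ℝ :=
  (fun n : ℕ => ((n : ℝ) + 1) ^ r * bestE γ δ n f) '' {n : ℕ | 1 ≤ n}

/-- Membership in the Hölder–Zygmund space `Z_r(u)`. -/
def MemZ (γ δ r : ℝ) (f : ℝ → ℝ) : Prop := MemC0 γ δ f ∧ BddAbove (zSet γ δ r f)

/-- The norm of `Z_r(u)`: `‖fu‖ + sup_{n≥1} (n+1)^r E_n(f)_u`. -/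
noncomputable def Znorm (γ δ r : ℝ) (f : ℝ → ℝ) : ℝ :=
  wnorm γ δ f + sSup (zSet γ δ r f)

/-- Exponents `(γ,δ)` of the weight `u = sqrt(w·φ)`. -/
def uExp : ChebKind → ℝ × ℝ
  | .one => (0, 0) | .two => (1 / 2, 1 / 2) | .three => (0, 1 / 2) | .four => (1 / 2, 0)

/-- The constant `C_w`. -/
def Cw : ChebKind → ℝ | .one => 2 | _ => 1

/-- The quantity `n_w`. -/
noncomputable def nw : ChebKind → ℕ → ℝ
  | .one, n => n | .two, n => n + 1
  | .three, n => (2 * (n : ℝ) + 1) / 2 | .four, n => (2 * (n : ℝ) + 1) / 2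

/-- The quantity `m_w`. -/
noncomputable def mw : ChebKind → ℕ → ℕ → ℝ
  | .one, n, m => (n : ℝ) + m | .two, n, m => (n : ℝ) + m
  | .three, n, m => 2 * ((n : ℝ) + m) - 1 | .four, n, m => 2 * ((n : ℝ) + m) - 1

/-- The polynomials `q_{n,j}^m(w,·)` (orthogonal VP basis). -/
noncomputable def qq (w : ChebKind) (n m j : ℕ) (x : ℝ) : ℝ :=
  if j ≤ n - m then pEval w j x
  else ((m : ℝ) + n - j) / (2 * m) * pEval w j x
    - ((m : ℝ) + j - n) / (2 * m) * pEval w (2 * n - j) x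

end

/-! Substituting `x = cos t` turns `∫_{-1}^1 p_a p_b w` into `∫_0^π sin t · (p_a p_b w)(cos t) dt`.
In the trigonometric form of the `p_j`, and since `sin t · w(cos t)` is `1`, `sin² t`,
`2 cos² (t/2)` or `2 sin² (t/2)`, this integrand is a combination of `cos ((a - b) t)` and
`cos ((a + b + s) t)`, whose integrals over `[0, π]` vanish for `a ≠ b`.
Each `q_{n,j}^m` is a combination of `p_j` and `p_{2n-j}`, and for distinct `i, j < n` the index
pairs `{j, 2n - j}` and `{i, 2n - i}` are disjoint. -/

open MeasureTheory

lemma integral_neg_one_one_eq_integral_Ioo_sin_mul_comp_cos (g : ℝ → ℝ) :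
    ∫ x in (-1)..1, g x = ∫ t in Ioo 0 π, sin t * g (cos t) := by
  rw [intervalIntegral.integral_of_le (by norm_num), ← integral_Icc_eq_integral_Ioc,
    ← bijOn_cos.image_eq, integral_image_eq_integral_abs_deriv_smul measurableSet_Icc
      (fun t _ => (hasDerivAt_cos t).hasDerivWithinAt) injOn_cos,
    integral_Icc_eq_integral_Ioo]
  refine setIntegral_congr_fun measurableSet_Ioo fun t ht => ?_
  rw [abs_neg, abs_of_pos (sin_pos_of_mem_Ioo ht), smul_eq_mul]

lemma intervalIntegrable_neg_one_one_iff (g : ℝ → ℝ) :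
    IntervalIntegrable g volume (-1) 1 ↔
      IntegrableOn (fun t => sin t * g (cos t)) (Ioo 0 π) := by
  rw [intervalIntegrable_iff_integrableOn_Icc_of_le (by norm_num), ← bijOn_cos.image_eq,
    integrableOn_image_iff_integrableOn_abs_deriv_smul measurableSet_Icc
      (fun t _ => (hasDerivAt_cos t).hasDerivWithinAt) injOn_cos,
    integrableOn_Icc_iff_integrableOn_Ioo]
  refine integrableOn_congr_fun (fun t ht => ?_) measurableSet_Ioo
  rw [abs_neg, abs_of_pos (sin_pos_of_mem_Ioo ht), smul_eq_mul]

def HasVanishingIntegral (g : ℝ → ℝ) : Prop :=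
  IntervalIntegrable g volume (-1) 1 ∧ ∫ x in (-1)..1, g x = 0

lemma HasVanishingIntegral.add {f g : ℝ → ℝ} (hf : HasVanishingIntegral f)
    (hg : HasVanishingIntegral g) : HasVanishingIntegral (fun x => f x + g x) :=
  ⟨hf.1.add hg.1, by rw [intervalIntegral.integral_add hf.1 hg.1, hf.2, hg.2, add_zero]⟩

lemma HasVanishingIntegral.const_mul {g : ℝ → ℝ} (hg : HasVanishingIntegral g) (c : ℝ) :
    HasVanishingIntegral (fun x => c * g x) :=
  ⟨hg.1.const_mul c, by rw [intervalIntegral.integral_const_mul, hg.2, mul_zero]⟩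

lemma hasVanishingIntegral_of_sin_mul_comp_cos_eqOn {g f : ℝ → ℝ} (hf : Continuous f)
    (hf₀ : ∫ t in (0)..π, f t = 0) (hg : EqOn (fun t => sin t * g (cos t)) f (Ioo 0 π)) :
    HasVanishingIntegral g := by
  refine ⟨(intervalIntegrable_neg_one_one_iff g).2 ?_, ?_⟩
  · exact (integrableOn_congr_fun hg measurableSet_Ioo).2
      (hf.integrableOn_Icc.mono_set Ioo_subset_Icc_self)
  · rw [integral_neg_one_one_eq_integral_Ioo_sin_mul_comp_cos, setIntegral_congr_fun
      measurableSet_Ioo hg, ← integral_Ioc_eq_integral_Ioo,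
      ← intervalIntegral.integral_of_le pi_pos.le, hf₀]

lemma integral_cos_int_mul_eq_zero {k : ℤ} (hk : k ≠ 0) :
    ∫ t in (0)..π, cos (k * t) = 0 := by
  rw [intervalIntegral.integral_comp_mul_left cos (Int.cast_ne_zero.2 hk)]
  simp [sin_int_mul_pi]

lemma integral_cos_int_mul_add_cos_int_mul_eq_zero {k l : ℤ} (hk : k ≠ 0) (hl : l ≠ 0)
    (c d : ℝ) : ∫ t in (0)..π, c * cos (k * t) + d * cos (l * t) = 0 := by
  rw [intervalIntegral.integral_add ((by fun_prop : Continuous _).intervalIntegrable _ _)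
      ((by fun_prop : Continuous _).intervalIntegrable _ _),
    intervalIntegral.integral_const_mul, intervalIntegral.integral_const_mul,
    integral_cos_int_mul_eq_zero hk, integral_cos_int_mul_eq_zero hl]
  ring

lemma sin_half_pos {t : ℝ} (ht : t ∈ Ioo 0 π) : 0 < sin (t / 2) :=
  sin_pos_of_pos_of_lt_pi (by linarith [ht.1]) (by linarith [ht.2, pi_pos])

lemma cos_half_pos {t : ℝ} (ht : t ∈ Ioo 0 π) : 0 < cos (t / 2) :=
  cos_pos_of_mem_Ioo ⟨by linarith [ht.1, pi_pos], by linarith [ht.2]⟩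

lemma sin_eq_two_mul_sin_half_mul_cos_half (t : ℝ) : sin t = 2 * sin (t / 2) * cos (t / 2) := by
  rw [← sin_two_mul, mul_div_cancel₀ t two_ne_zero]

lemma pEval_one_succ_cos (j : ℕ) (t : ℝ) :
    pEval .one (j + 1) (cos t) = √(2 / π) * cos ((j + 1) * t) := by
  simp only [pEval, pPoly, eval_mul, eval_C, Chebyshev.T_real_cos]
  push_cast
  rfl

lemma pEval_two_cos_mul_sin (j : ℕ) (t : ℝ) :
    pEval .two j (cos t) * sin t = √(2 / π) * sin ((j + 1) * t) := by
  simp only [pEval, pPoly, eval_mul, eval_C, mul_assoc, Chebyshev.U_real_cos]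
  push_cast
  rfl

lemma pEval_three_cos_mul_cos_half (j : ℕ) {t : ℝ} (ht : sin (t / 2) ≠ 0) :
    pEval .three j (cos t) * cos (t / 2) = 1 / √π * cos ((j + 1 / 2) * t) := by
  have hU : pEval .three j (cos t) * sin t = 1 / √π * (sin ((j + 1) * t) - sin (j * t)) := by
    simp only [pEval, pPoly, eval_mul, eval_C, eval_sub, mul_assoc, sub_mul,
      Chebyshev.U_real_cos]
    push_cast
    ring_nf
  have hsub : sin ((j + 1) * t) - sin (j * t) = 2 * sin (t / 2) * cos ((j + 1 / 2) * t) := by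
    rw [sin_sub_sin]
    ring_nf
  rw [sin_eq_two_mul_sin_half_mul_cos_half, hsub] at hU
  apply mul_left_cancel₀ (mul_ne_zero two_ne_zero ht)
  linear_combination hU

lemma pEval_four_cos_mul_sin_half (j : ℕ) {t : ℝ} (ht : cos (t / 2) ≠ 0) :
    pEval .four j (cos t) * sin (t / 2) = 1 / √π * sin ((j + 1 / 2) * t) := by
  have hU : pEval .four j (cos t) * sin t = 1 / √π * (sin ((j + 1) * t) + sin (j * t)) := by
    simp only [pEval, pPoly, eval_mul, eval_C, eval_add, mul_assoc, add_mul,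
      Chebyshev.U_real_cos]
    push_cast
    ring_nf
  have hadd : sin ((j + 1) * t) + sin (j * t) = 2 * cos (t / 2) * sin ((j + 1 / 2) * t) := by
    rw [sin_add_sin]
    ring_nf
  rw [sin_eq_two_mul_sin_half_mul_cos_half, hadd] at hU
  apply mul_left_cancel₀ (mul_ne_zero two_ne_zero ht)
  linear_combination hU

lemma sqrt_one_sub_cos_sq {t : ℝ} (ht : t ∈ Ioo 0 π) : √(1 - cos t ^ 2) = sin t := by
  rw [← sin_sq, sqrt_sq (sin_pos_of_mem_Ioo ht).le]

lemma sin_mul_wFn_one_cos {t : ℝ} (ht : t ∈ Ioo 0 π) : sin t * wFn .one (cos t) = 1 := by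
  rw [wFn, sqrt_one_sub_cos_sq ht, mul_one_div_cancel (sin_pos_of_mem_Ioo ht).ne']

lemma sin_mul_wFn_two_cos {t : ℝ} (ht : t ∈ Ioo 0 π) :
    sin t * wFn .two (cos t) = sin t ^ 2 := by
  rw [wFn, sqrt_one_sub_cos_sq ht, sq]

lemma one_add_cos_eq (t : ℝ) : 1 + cos t = 2 * cos (t / 2) ^ 2 := by
  rw [cos_sq, mul_div_cancel₀ t two_ne_zero]
  ring

lemma one_sub_cos_eq (t : ℝ) : 1 - cos t = 2 * sin (t / 2) ^ 2 := by
  rw [sin_sq, cos_sq, mul_div_cancel₀ t two_ne_zero]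
  ring

lemma sin_mul_wFn_three_cos {t : ℝ} (ht : t ∈ Ioo 0 π) :
    sin t * wFn .three (cos t) = 2 * cos (t / 2) ^ 2 := by
  have hs := sin_half_pos ht
  have hc := cos_half_pos ht
  rw [wFn, one_add_cos_eq, one_sub_cos_eq, mul_div_mul_left _ _ two_ne_zero, ← div_pow,
    sqrt_sq (div_pos hc hs).le, sin_eq_two_mul_sin_half_mul_cos_half]
  field_simp

lemma sin_mul_wFn_four_cos {t : ℝ} (ht : t ∈ Ioo 0 π) :
    sin t * wFn .four (cos t) = 2 * sin (t / 2) ^ 2 := by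
  have hs := sin_half_pos ht
  have hc := cos_half_pos ht
  rw [wFn, one_add_cos_eq, one_sub_cos_eq, mul_div_mul_left _ _ two_ne_zero, ← div_pow,
    sqrt_sq (div_pos hs hc).le, sin_eq_two_mul_sin_half_mul_cos_half]
  field_simp

lemma hasVanishingIntegral_of_sin_mul_comp_cos_eqOn_cos_add_cos {g : ℝ → ℝ} {c d : ℝ} {k l : ℤ}
    (hk : k ≠ 0) (hl : l ≠ 0)
    (hg : EqOn (fun t => sin t * g (cos t)) (fun t => c * cos (k * t) + d * cos (l * t))
      (Ioo 0 π)) :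
    HasVanishingIntegral g :=
  hasVanishingIntegral_of_sin_mul_comp_cos_eqOn (by fun_prop)
    (integral_cos_int_mul_add_cos_int_mul_eq_zero hk hl c d) hg

lemma sqrt_two_div_pi_mul_self : √(2 / π) * √(2 / π) = 2 / π :=
  mul_self_sqrt (by positivity)

lemma one_div_sqrt_pi_mul_self : 1 / √π * (1 / √π) = 1 / π := by
  rw [div_mul_div_comm, one_mul, mul_self_sqrt pi_pos.le]

lemma sin_mul_pEval_one_mul_pEval_one_mul_wFn_cos (a b : ℕ) :
    EqOn (fun t => sin t *
        (pEval .one (a + 1) (cos t) * pEval .one (b + 1) (cos t) * wFn .one (cos t)))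
      (fun t => π⁻¹ * cos (((a - b : ℤ) : ℝ) * t) + π⁻¹ * cos (((a + b + 2 : ℤ) : ℝ) * t))
      (Ioo 0 π) := by
  intro t ht
  have hk : ((a - b : ℤ) : ℝ) * t = (a + 1) * t - (b + 1) * t := by push_cast; ring
  have hl : ((a + b + 2 : ℤ) : ℝ) * t = (a + 1) * t + (b + 1) * t := by push_cast; ring
  dsimp only
  rw [mul_left_comm, sin_mul_wFn_one_cos ht, mul_one, pEval_one_succ_cos, pEval_one_succ_cos,
    hk, hl]
  linear_combination (cos ((a + 1) * t) * cos ((b + 1) * t)) * sqrt_two_div_pi_mul_self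
    + π⁻¹ * two_mul_cos_mul_cos ((a + 1) * t) ((b + 1) * t)

lemma sin_mul_pEval_two_mul_pEval_two_mul_wFn_cos (a b : ℕ) :
    EqOn (fun t => sin t * (pEval .two a (cos t) * pEval .two b (cos t) * wFn .two (cos t)))
      (fun t => π⁻¹ * cos (((a - b : ℤ) : ℝ) * t) + -π⁻¹ * cos (((a + b + 2 : ℤ) : ℝ) * t))
      (Ioo 0 π) := by
  intro t ht
  have hk : ((a - b : ℤ) : ℝ) * t = (a + 1) * t - (b + 1) * t := by push_cast; ring
  have hl : ((a + b + 2 : ℤ) : ℝ) * t = (a + 1) * t + (b + 1) * t := by push_cast; ring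
  dsimp only
  calc _ = pEval .two a (cos t) * pEval .two b (cos t) * (sin t * wFn .two (cos t)) :=
        mul_left_comm _ _ _
    _ = (pEval .two a (cos t) * sin t) * (pEval .two b (cos t) * sin t) := by
        rw [sin_mul_wFn_two_cos ht]; ring
    _ = _ := by
      rw [pEval_two_cos_mul_sin, pEval_two_cos_mul_sin, hk, hl]
      linear_combination (sin ((a + 1) * t) * sin ((b + 1) * t)) * sqrt_two_div_pi_mul_self
        + π⁻¹ * two_mul_sin_mul_sin ((a + 1) * t) ((b + 1) * t)

lemma sin_mul_pEval_three_mul_pEval_three_mul_wFn_cos (a b : ℕ) :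
    EqOn (fun t => sin t *
        (pEval .three a (cos t) * pEval .three b (cos t) * wFn .three (cos t)))
      (fun t => π⁻¹ * cos (((a - b : ℤ) : ℝ) * t) + π⁻¹ * cos (((a + b + 1 : ℤ) : ℝ) * t))
      (Ioo 0 π) := by
  intro t ht
  have hs := (sin_half_pos ht).ne'
  have hk : ((a - b : ℤ) : ℝ) * t = (a + 1 / 2) * t - (b + 1 / 2) * t := by push_cast; ring
  have hl : ((a + b + 1 : ℤ) : ℝ) * t = (a + 1 / 2) * t + (b + 1 / 2) * t := by push_cast; ring
  dsimp only
  calc _ = pEval .three a (cos t) * pEval .three b (cos t) *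
          (sin t * wFn .three (cos t)) :=
        mul_left_comm _ _ _
    _ = 2 * (pEval .three a (cos t) * cos (t / 2)) *
          (pEval .three b (cos t) * cos (t / 2)) := by
        rw [sin_mul_wFn_three_cos ht]; ring
    _ = _ := by
      rw [pEval_three_cos_mul_cos_half a hs, pEval_three_cos_mul_cos_half b hs, hk, hl]
      linear_combination
        (2 * cos ((a + 1 / 2) * t) * cos ((b + 1 / 2) * t)) * one_div_sqrt_pi_mul_self
        + π⁻¹ * two_mul_cos_mul_cos ((a + 1 / 2) * t) ((b + 1 / 2) * t)

lemma sin_mul_pEval_four_mul_pEval_four_mul_wFn_cos (a b : ℕ) :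
    EqOn (fun t => sin t *
        (pEval .four a (cos t) * pEval .four b (cos t) * wFn .four (cos t)))
      (fun t => π⁻¹ * cos (((a - b : ℤ) : ℝ) * t) + -π⁻¹ * cos (((a + b + 1 : ℤ) : ℝ) * t))
      (Ioo 0 π) := by
  intro t ht
  have hc := (cos_half_pos ht).ne'
  have hk : ((a - b : ℤ) : ℝ) * t = (a + 1 / 2) * t - (b + 1 / 2) * t := by push_cast; ring
  have hl : ((a + b + 1 : ℤ) : ℝ) * t = (a + 1 / 2) * t + (b + 1 / 2) * t := by push_cast; ring
  dsimp only
  calc _ = pEval .four a (cos t) * pEval .four b (cos t) * (sin t * wFn .four (cos t)) :=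
        mul_left_comm _ _ _
    _ = 2 * (pEval .four a (cos t) * sin (t / 2)) *
          (pEval .four b (cos t) * sin (t / 2)) := by
        rw [sin_mul_wFn_four_cos ht]; ring
    _ = _ := by
      rw [pEval_four_cos_mul_sin_half a hc, pEval_four_cos_mul_sin_half b hc, hk, hl]
      linear_combination
        (2 * sin ((a + 1 / 2) * t) * sin ((b + 1 / 2) * t)) * one_div_sqrt_pi_mul_self
        + π⁻¹ * two_mul_sin_mul_sin ((a + 1 / 2) * t) ((b + 1 / 2) * t)

lemma hasVanishingIntegral_pEval_one_zero_mul_pEval_one_succ (b : ℕ) :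
    HasVanishingIntegral (fun x => pEval .one 0 x * pEval .one (b + 1) x * wFn .one x) := by
  refine hasVanishingIntegral_of_sin_mul_comp_cos_eqOn
    (f := fun t => 1 / √π * √(2 / π) * cos (((b + 1 : ℤ) : ℝ) * t)) (by fun_prop) ?_ ?_
  · rw [intervalIntegral.integral_const_mul, integral_cos_int_mul_eq_zero (by omega), mul_zero]
  · intro t ht
    dsimp only
    rw [mul_left_comm, sin_mul_wFn_one_cos ht, mul_one, pEval_one_succ_cos]
    simp [pEval, pPoly, mul_assoc]

lemma hasVanishingIntegral_pEval_mul_pEval_mul_wFn (w : ChebKind) {a b : ℕ} (hab : a ≠ b) :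
    HasVanishingIntegral (fun x => pEval w a x * pEval w b x * wFn w x) := by
  have hk : (a - b : ℤ) ≠ 0 := sub_ne_zero.2 (Nat.cast_injective.ne hab)
  cases w with
  | one =>
    rcases a with _ | a <;> rcases b with _ | b
    · exact absurd rfl hab
    · exact hasVanishingIntegral_pEval_one_zero_mul_pEval_one_succ b
    · simpa only [mul_comm (pEval .one (a + 1) _)] using
        hasVanishingIntegral_pEval_one_zero_mul_pEval_one_succ a
    · exact hasVanishingIntegral_of_sin_mul_comp_cos_eqOn_cos_add_cos (by omega) (by omega)
        (sin_mul_pEval_one_mul_pEval_one_mul_wFn_cos a b)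
  | two =>
    exact hasVanishingIntegral_of_sin_mul_comp_cos_eqOn_cos_add_cos hk (by omega)
      (sin_mul_pEval_two_mul_pEval_two_mul_wFn_cos a b)
  | three =>
    exact hasVanishingIntegral_of_sin_mul_comp_cos_eqOn_cos_add_cos hk (by omega)
      (sin_mul_pEval_three_mul_pEval_three_mul_wFn_cos a b)
  | four =>
    exact hasVanishingIntegral_of_sin_mul_comp_cos_eqOn_cos_add_cos hk (by omega)
      (sin_mul_pEval_four_mul_pEval_four_mul_wFn_cos a b)

lemma exists_qq_eq (w : ChebKind) (n m j : ℕ) :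
    ∃ α β : ℝ, ∀ x, qq w n m j x = α * pEval w j x + β * pEval w (2 * n - j) x := by
  by_cases h : j ≤ n - m
  · exact ⟨1, 0, fun x => by simp [qq, h]⟩
  · exact ⟨((m : ℝ) + n - j) / (2 * m), -(((m : ℝ) + j - n) / (2 * m)),
      fun x => by simp only [qq, h, if_false]; ring⟩

lemma hasVanishingIntegral_add_mul_add_mul_wFn (w : ChebKind) {a b c d : ℕ}
    (hac : a ≠ c) (had : a ≠ d) (hbc : b ≠ c) (hbd : b ≠ d) (α β γ δ : ℝ) :
    HasVanishingIntegral (fun x =>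
      (α * pEval w a x + β * pEval w b x) * (γ * pEval w c x + δ * pEval w d x) * wFn w x) := by
  have h := ((((hasVanishingIntegral_pEval_mul_pEval_mul_wFn w hac).const_mul (α * γ)).add
    ((hasVanishingIntegral_pEval_mul_pEval_mul_wFn w had).const_mul (α * δ))).add
    ((hasVanishingIntegral_pEval_mul_pEval_mul_wFn w hbc).const_mul (β * γ))).add
    ((hasVanishingIntegral_pEval_mul_pEval_mul_wFn w hbd).const_mul (β * δ))
  convert h using 2 with x
  ring

theorem stmt15_general (w : ChebKind) (n m : ℕ)
    (i j : ℕ) (hi : i < n) (hj : j < n) (hij : i ≠ j) :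
    ∫ x in (-1 : ℝ)..1, qq w n m j x * qq w n m i x * wFn w x = 0 := by
  obtain ⟨α, β, hqj⟩ := exists_qq_eq w n m j
  obtain ⟨γ, δ, hqi⟩ := exists_qq_eq w n m i
  simp only [hqj, hqi]
  exact (hasVanishingIntegral_add_mul_add_mul_wFn w (by omega) (by omega) (by omega) (by omega)
    α β γ δ).2

/-- the polynomials `q_{n,j}^m(w,·)`, `j=0,…,n−1`, are pairwise
orthogonal with respect to `w`. -/
theorem stmt15 (w : ChebKind) (n m : ℕ) (hm : 0 < m) (hmn : m < n)
    (i j : ℕ) (hi : i < n) (hj : j < n) (hij : i ≠ j) :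
    ∫ x in (-1 : ℝ)..1, qq w n m j x * qq w n m i x * wFn w x = 0 :=
  stmt15_general w n m i j hi hj hij
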